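/- The RPSN representation transforms with the square root of the Jacobian determinant: if S̃(u,v) = S(μ(u,v), ν(u,v)) with Jacobian determinant |J| ≥ 0, then Q_{S̃}(u,v) = √|J(u,v)| • Q_S(μ(u,v), ν(u,v)), where Q_S = √‖S_u × S_v‖ • S. -/

import Mathlib

/-!
Both partials of `S ∘ (μ, ν)` are combinations of `S_u` and `S_v` whose coefficients form the
Jacobian matrix, so by bilinearity and antisymmetry of the cross product
`S̃_u × S̃_v = |J| • (S_u × S_v)`. Taking norms (using `|J| ≥ 0`) and square roots gives the
factor `√|J|`.
-/

noncomputable def cross3 (a b : EuclideanSpace ℝ (Fin 3)) : EuclideanSpace ℝ (Fin 3) :=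
  WithLp.toLp 2 ![a 1 * b 2 - a 2 * b 1, a 2 * b 0 - a 0 * b 2, a 0 * b 1 - a 1 * b 0]

/-- The RPSN representation `Q_S(u,v) = √‖S_u × S_v‖ • S(u,v)`. -/
noncomputable def RPSN (S : ℝ × ℝ → EuclideanSpace ℝ (Fin 3)) (p : ℝ × ℝ) :
    EuclideanSpace ℝ (Fin 3) :=
  Real.sqrt ‖cross3 (fderiv ℝ S p (1, 0)) (fderiv ℝ S p (0, 1))‖ • S p

lemma cross3_smul_add_smul (a b c d : ℝ) (x y : EuclideanSpace ℝ (Fin 3)) :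
    cross3 (a • x + b • y) (c • x + d • y) = (a * d - b * c) • cross3 x y := by
  ext i
  fin_cases i <;> simp [cross3] <;> ring

lemma ContinuousLinearMap.apply_prod_eq_smul_add_smul {R F : Type*} [Semiring R]
    [TopologicalSpace R] [AddCommMonoid F] [Module R F] [TopologicalSpace F]
    (D : R × R →L[R] F) (a b : R) :
    D (a, b) = a • D (1, 0) + b • D (0, 1) := by
  rw [← map_smul, ← map_smul, ← map_add]
  simp

lemma fderiv_comp_prodMk_apply {E F : Type*} [NormedAddCommGroup E] [NormedSpace ℝ E]
    [NormedAddCommGroup F] [NormedSpace ℝ F] {S : ℝ × ℝ → F} {μ ν : E → ℝ} {p : E}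
    (hS : DifferentiableAt ℝ S (μ p, ν p)) (hμ : DifferentiableAt ℝ μ p)
    (hν : DifferentiableAt ℝ ν p) (v : E) :
    fderiv ℝ (fun q => S (μ q, ν q)) p v =
      fderiv ℝ μ p v • fderiv ℝ S (μ p, ν p) (1, 0) +
        fderiv ℝ ν p v • fderiv ℝ S (μ p, ν p) (0, 1) := by
  have hcomp : HasFDerivAt (fun q => S (μ q, ν q))
      ((fderiv ℝ S (μ p, ν p)).comp ((fderiv ℝ μ p).prod (fderiv ℝ ν p))) p :=
    hS.hasFDerivAt.comp p (hμ.hasFDerivAt.prodMk hν.hasFDerivAt)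
  rw [hcomp.fderiv]
  exact ContinuousLinearMap.apply_prod_eq_smul_add_smul _ _ _

lemma cross3_fderiv_comp_prodMk {S : ℝ × ℝ → EuclideanSpace ℝ (Fin 3)} {μ ν : ℝ × ℝ → ℝ}
    {p : ℝ × ℝ} (hS : DifferentiableAt ℝ S (μ p, ν p)) (hμ : DifferentiableAt ℝ μ p)
    (hν : DifferentiableAt ℝ ν p) :
    cross3 (fderiv ℝ (fun q => S (μ q, ν q)) p (1, 0))
        (fderiv ℝ (fun q => S (μ q, ν q)) p (0, 1)) =
      (fderiv ℝ μ p (1, 0) * fderiv ℝ ν p (0, 1) - fderiv ℝ μ p (0, 1) * fderiv ℝ ν p (1, 0)) •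
        cross3 (fderiv ℝ S (μ p, ν p) (1, 0)) (fderiv ℝ S (μ p, ν p) (0, 1)) := by
  simp only [fderiv_comp_prodMk_apply hS hμ hν, cross3_smul_add_smul,
    mul_comm (fderiv ℝ ν p (1, 0))]

/-- the RPSN representation transforms with the square root of the
Jacobian determinant. -/
theorem stmt3 (S : ℝ × ℝ → EuclideanSpace ℝ (Fin 3)) (μ ν : ℝ × ℝ → ℝ)
    (hS : Differentiable ℝ S) (hμ : Differentiable ℝ μ) (hν : Differentiable ℝ ν)
    (J : ℝ × ℝ → ℝ)
    (hJdef : ∀ p, J p = fderiv ℝ μ p (1, 0) * fderiv ℝ ν p (0, 1) -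
        fderiv ℝ μ p (0, 1) * fderiv ℝ ν p (1, 0))
    (hJ : ∀ p, 0 ≤ J p)
    (Stilde : ℝ × ℝ → EuclideanSpace ℝ (Fin 3))
    (hSt : ∀ p, Stilde p = S (μ p, ν p)) (p : ℝ × ℝ) :
    RPSN Stilde p = Real.sqrt (J p) • RPSN S (μ p, ν p) := by
  obtain rfl : Stilde = fun q => S (μ q, ν q) := funext hSt
  have hcross := cross3_fderiv_comp_prodMk (hS (μ p, ν p)) (hμ p) (hν p)
  rw [← hJdef] at hcross
  rw [RPSN, RPSN, hcross, norm_smul, Real.norm_of_nonneg (hJ p), Real.sqrt_mul (hJ p), smul_smul]
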